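/- Let $\phi(\theta) = E[e^{-\theta W}]$ be the Laplace transform of a nonnegative random variable $W$, and suppose $1 - \phi(\theta) \sim D\theta^{\gamma}$ as $\theta \downarrow 0$ with $D > 0$, $0 < \gamma < 1$. Then $-\phi'(\theta) = E[W e^{-\theta W}] \sim \gamma D \theta^{\gamma - 1}$ as $\theta \downarrow 0$. -/

import Mathlib

/-!
Write `F θ = 1 - E[e^{-θW}]`. Its derivative `g θ = E[W e^{-θW}]` is decreasing, so `F` lies
below its tangent lines: `F (c θ) - F θ ≤ (c - 1) θ g θ` for every `c > 0`. Dividing by `θ^γ`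
and letting `θ → 0`, the left side tends to `(c^γ - 1) D`, which bounds `g θ / θ^(γ-1)`
asymptotically from below by `D (c^γ - 1) / (c - 1)` when `c > 1` and from above when `c < 1`.
Both bounds tend to `γ D` as `c → 1`.
-/

open Filter Topology MeasureTheory ProbabilityTheory Set

theorem tendsto_of_forall_eventually_le_of_tendsto
    {ι α β : Type*} [TopologicalSpace β] [LinearOrder β] [OrderTopology β]
    {p q : Filter ι} {l : Filter α} {f : α → β} {lo hi : ι → α → β} {a b : ι → β} {x : β}
    (ha : Tendsto a p (𝓝 x)) (hb : Tendsto b q (𝓝 x))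
    (hlo : ∀ᶠ c in p, Tendsto (lo c) l (𝓝 (a c)) ∧ ∀ᶠ t in l, lo c t ≤ f t)
    (hhi : ∀ᶠ c in q, Tendsto (hi c) l (𝓝 (b c)) ∧ ∀ᶠ t in l, f t ≤ hi c t)
    [p.NeBot] [q.NeBot] : Tendsto f l (𝓝 x) := by
  refine tendsto_order.2 ⟨fun y hy => ?_, fun y hy => ?_⟩
  · obtain ⟨c, hyc, hc, hle⟩ := ((ha.eventually (lt_mem_nhds hy)).and hlo).exists
    filter_upwards [hc.eventually (lt_mem_nhds hyc), hle] with t h1 h2 using h1.trans_le h2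
  · obtain ⟨c, hyc, hc, hle⟩ := ((hb.eventually (gt_mem_nhds hy)).and hhi).exists
    filter_upwards [hc.eventually (gt_mem_nhds hyc), hle] with t h1 h2 using h2.trans_lt h1

theorem tendsto_const_mul_nhdsGT_zero {c : ℝ} (hc : 0 < c) :
    Tendsto (c * ·) (𝓝[>] (0 : ℝ)) (𝓝[>] 0) :=
  tendsto_nhdsWithin_iff.2
    ⟨((continuous_const_mul c).tendsto' 0 0 (mul_zero c)).mono_left nhdsWithin_le_nhds,
      eventually_nhdsWithin_of_forall fun _ hx => mul_pos hc hx⟩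

theorem tendsto_rpow_sub_one_div_sub_one (γ : ℝ) :
    Tendsto (fun c : ℝ => (c ^ γ - 1) / (c - 1)) (𝓝[≠] 1) (𝓝 γ) := by
  have h := (Real.hasDerivAt_rpow_const (x := 1) (p := γ) (Or.inl one_ne_zero)).tendsto_slope
  simp only [Real.one_rpow, mul_one] at h
  refine h.congr fun c => ?_
  rw [slope_def_field, Real.one_rpow]

theorem image_sub_le_mul_sub_of_hasDerivAt_of_antitoneOn {s : Set ℝ} (hs : s.OrdConnected)
    {F g : ℝ → ℝ} (hF : ∀ x ∈ s, HasDerivAt F (g x) x) (hg : AntitoneOn g s)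
    {x y : ℝ} (hx : x ∈ s) (hy : y ∈ s) : F y - F x ≤ g x * (y - x) := by
  have hcont : ∀ {a b}, a ∈ s → b ∈ s → ContinuousOn F (Icc a b) := fun ha hb z hz =>
    (hF z (hs.out ha hb hz)).continuousAt.continuousWithinAt
  have hderiv : ∀ {a b}, a ∈ s → b ∈ s → ∀ z ∈ Ioo a b, HasDerivAt F (g z) z := fun ha hb z hz =>
    hF z (hs.out ha hb (Ioo_subset_Icc_self hz))
  rcases lt_trichotomy x y with hxy | rfl | hyx
  · obtain ⟨z, hz, hslope⟩ := exists_hasDerivAt_eq_slope F g hxy (hcont hx hy) (hderiv hx hy)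
    have : g z ≤ g x := hg hx (hs.out hx hy (Ioo_subset_Icc_self hz)) hz.1.le
    rw [eq_div_iff (sub_ne_zero.2 hxy.ne')] at hslope
    nlinarith
  · simp
  · obtain ⟨z, hz, hslope⟩ := exists_hasDerivAt_eq_slope F g hyx (hcont hy hx) (hderiv hy hx)
    have : g x ≤ g z := hg (hs.out hy hx (Ioo_subset_Icc_self hz)) hx hz.2.le
    rw [eq_div_iff (sub_ne_zero.2 hyx.ne')] at hslope
    nlinarith

theorem tendsto_div_rpow_sub_one_of_hasDerivAt_of_antitoneOn {F g : ℝ → ℝ} {γ L : ℝ}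
    (hF : ∀ x ∈ Ioi (0 : ℝ), HasDerivAt F (g x) x) (hg : AntitoneOn g (Ioi 0))
    (hlim : Tendsto (fun t => F t / t ^ γ) (𝓝[>] 0) (𝓝 L)) :
    Tendsto (fun t => g t / t ^ (γ - 1)) (𝓝[>] 0) (𝓝 (γ * L)) := by
  set Q : ℝ → ℝ → ℝ := fun c t => (F (c * t) - F t) / ((c - 1) * t ^ γ)
  have hQ : ∀ c > 0, Tendsto (Q c) (𝓝[>] 0) (𝓝 ((c ^ γ - 1) / (c - 1) * L)) := by
    intro c hc
    have h := ((hlim.comp (tendsto_const_mul_nhdsGT_zero hc)).const_mul (c ^ γ)).sub hlim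
    rw [show (c ^ γ - 1) / (c - 1) * L = (c ^ γ * L - L) / (c - 1) by ring]
    refine (h.div_const (c - 1)).congr' ?_
    filter_upwards [self_mem_nhdsWithin] with t (ht : 0 < t)
    simp only [Function.comp_apply, Q, Real.mul_rpow hc.le ht.le]
    field_simp
  have hbound : ∀ c > 0, ∀ t > 0, F (c * t) - F t ≤ (g t / t ^ (γ - 1)) * ((c - 1) * t ^ γ) := by
    intro c hc t ht
    have hpow : t ^ γ = t ^ (γ - 1) * t := by
      rw [← Real.rpow_add_one ht.ne', sub_add_cancel]
    calc F (c * t) - F t ≤ g t * (c * t - t) :=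
          image_sub_le_mul_sub_of_hasDerivAt_of_antitoneOn ordConnected_Ioi hF hg ht
            (mul_pos hc ht)
      _ = (g t / t ^ (γ - 1)) * ((c - 1) * t ^ γ) := by
          rw [hpow]; field_simp
  have hslope := (tendsto_rpow_sub_one_div_sub_one γ).mul_const L
  refine tendsto_of_forall_eventually_le_of_tendsto (lo := Q) (hi := Q)
    (hslope.mono_left (nhdsGT_le_nhdsNE 1)) (hslope.mono_left (nhdsLT_le_nhdsNE 1)) ?_ ?_
  · filter_upwards [self_mem_nhdsWithin] with c (hc : 1 < c)
    refine ⟨hQ c (by linarith), ?_⟩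
    filter_upwards [self_mem_nhdsWithin] with t (ht : 0 < t)
    have hden : 0 < (c - 1) * t ^ γ := mul_pos (by linarith) (Real.rpow_pos_of_pos ht γ)
    exact (div_le_iff₀ hden).2 (hbound c (by linarith) t ht)
  · filter_upwards [self_mem_nhdsWithin, Ioo_mem_nhdsLT zero_lt_one] with c (hc : c < 1) hc0
    refine ⟨hQ c hc0.1, ?_⟩
    filter_upwards [self_mem_nhdsWithin] with t (ht : 0 < t)
    have hden : (c - 1) * t ^ γ < 0 :=
      mul_neg_of_neg_of_pos (by linarith) (Real.rpow_pos_of_pos ht γ)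
    exact (le_div_iff_of_neg hden).2 (hbound c hc0.1 t ht)

section NonnegLaplace

variable {Ω : Type*} [MeasurableSpace Ω] {μ : Measure Ω} [IsFiniteMeasure μ] {X : Ω → ℝ}

theorem Iio_zero_subset_interior_integrableExpSet (hX : AEMeasurable X μ)
    (hX0 : ∀ᵐ ω ∂μ, 0 ≤ X ω) : Iio 0 ⊆ interior (integrableExpSet X μ) := by
  rw [← interior_Iic]
  refine interior_mono fun t (ht : t ≤ 0) => ?_
  refine Integrable.of_bound (by fun_prop) 1 ?_
  filter_upwards [hX0] with ω hω
  rw [Real.norm_eq_abs, Real.abs_exp, Real.exp_le_one_iff]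
  exact mul_nonpos_of_nonpos_of_nonneg ht hω

theorem hasDerivAt_integral_exp_neg_mul (hX : AEMeasurable X μ) (hX0 : ∀ᵐ ω ∂μ, 0 ≤ X ω)
    {θ : ℝ} (hθ : 0 < θ) :
    HasDerivAt (fun t : ℝ => ∫ ω, Real.exp (-t * X ω) ∂μ)
      (-(∫ ω, X ω * Real.exp (-θ * X ω) ∂μ)) θ := by
  have h := hasDerivAt_mgf (Iio_zero_subset_interior_integrableExpSet hX hX0 (neg_lt_zero.2 hθ))
  simpa [mgf, Function.comp_def] using h.comp θ (hasDerivAt_neg θ)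

theorem antitoneOn_integral_mul_exp_neg_mul (hX : AEMeasurable X μ) (hX0 : ∀ᵐ ω ∂μ, 0 ≤ X ω) :
    AntitoneOn (fun θ : ℝ => ∫ ω, X ω * Real.exp (-θ * X ω) ∂μ) (Ioi 0) := by
  have hint : ∀ θ : ℝ, 0 < θ → Integrable (fun ω => X ω * Real.exp (-θ * X ω)) μ := by
    intro θ hθ
    simpa using integrable_pow_mul_exp_of_mem_interior_integrableExpSet
      (Iio_zero_subset_interior_integrableExpSet hX hX0 (neg_lt_zero.2 hθ)) 1
  intro a (ha : 0 < a) b (hb : 0 < b) hab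
  refine integral_mono_ae (hint b hb) (hint a ha) ?_
  filter_upwards [hX0] with ω hω
  exact mul_le_mul_of_nonneg_left (Real.exp_le_exp.2 (by nlinarith)) hω

end NonnegLaplace

theorem laplace_derivative_asymptotics
    {Ω : Type*} [MeasurableSpace Ω] (μ : Measure Ω) [IsProbabilityMeasure μ]
    (W : Ω → ℝ) (D γ : ℝ)
    (hD : 0 < D) (hγ : γ ∈ Set.Ioo (0:ℝ) 1)
    (hmeas : Measurable W) (hnonneg : ∀ ω, 0 ≤ W ω)
    (hlaplace : Filter.Tendsto
      (fun θ : ℝ => (1 - ∫ ω, Real.exp (-θ * W ω) ∂μ) / (D * θ ^ γ))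
      (nhdsWithin 0 (Set.Ioi 0)) (nhds 1)) :
    (∀ θ : ℝ, 0 < θ →
      HasDerivAt (fun t : ℝ => ∫ ω, Real.exp (-t * W ω) ∂μ)
        (-(∫ ω, W ω * Real.exp (-θ * W ω) ∂μ)) θ) ∧
    Filter.Tendsto
      (fun θ : ℝ =>
        (∫ ω, W ω * Real.exp (-θ * W ω) ∂μ) / (γ * D * θ ^ (γ - 1)))
      (nhdsWithin 0 (Set.Ioi 0)) (nhds 1) := by
  have hderiv := fun θ (hθ : 0 < θ) =>
    hasDerivAt_integral_exp_neg_mul hmeas.aemeasurable (ae_of_all μ hnonneg) hθ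
  refine ⟨hderiv, ?_⟩
  have hγD : γ * D ≠ 0 := mul_ne_zero hγ.1.ne' hD.ne'
  have hF : Tendsto (fun θ : ℝ => (1 - ∫ ω, Real.exp (-θ * W ω) ∂μ) / θ ^ γ)
      (𝓝[>] 0) (𝓝 D) := by
    refine (mul_one D ▸ hlaplace.const_mul D).congr fun θ => ?_
    field_simp
  have hg := tendsto_div_rpow_sub_one_of_hasDerivAt_of_antitoneOn
    (fun θ (hθ : 0 < θ) => by simpa using (hderiv θ hθ).const_sub 1)
    (antitoneOn_integral_mul_exp_neg_mul hmeas.aemeasurable (ae_of_all μ hnonneg)) hF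
  refine (div_self hγD ▸ hg.div_const (γ * D)).congr fun θ => ?_
  rw [div_div, mul_comm]
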